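/- arXiv:2209.15149 — 11 statements merged into one kernel-verified Lean document; each statement's English description precedes it below -/
import Mathlib

section
/- Let ε be a real number with 0 ≤ ε < 1/9, and let x_u, x_v, s, c, w ∈ [0, 1] satisfy: |s − min(x_u + x_v, 1)| ≤ ε; |c − 5/9| ≤ ε; if s < c − ε then w ≥ 1 − ε; and if s > c + ε then w ≤ ε. Then: (1) if x_u ≤ ε and x_v ≤ ε, then w ≥ 1 − ε; and (2) if x_u ≥ 1 − ε or x_v ≥ 1 − ε, then w ≤ ε. -/
/-! The threshold 5/9 separates the two possible ranges of the truncated sum: it is at most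
`2ε` when both inputs encode 0 and at least `1 - ε` when one of them encodes 1. Each gate adds
an error of at most `ε` on either side, so the comparison is decided as soon as the
threshold stays more than `3ε` away from both ranges, which is what `ε < 1/9` guarantees. -/

section ComparisonMargin

variable {s t c k ε : ℝ}

lemma lt_sub_of_abs_sub_le (hs : |s - t| ≤ ε) (hc : |c - k| ≤ ε) (h : t < k - 3 * ε) :
    s < c - ε := by
  rw [abs_le] at hs hc
  linarith

lemma add_lt_of_abs_sub_le (hs : |s - t| ≤ ε) (hc : |c - k| ≤ ε) (h : k + 3 * ε < t) :
    c + ε < s := by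
  rw [abs_le] at hs hc
  linarith

end ComparisonMargin

lemma sub_le_min_add_one {x y ε : ℝ} (hx : 0 ≤ x) (hy : 0 ≤ y) (hε : 0 ≤ ε)
    (h : 1 - ε ≤ x ∨ 1 - ε ≤ y) : 1 - ε ≤ min (x + y) 1 := by
  refine le_min ?_ (by linarith)
  rcases h with h | h <;> linarith

theorem gcircuit_nor_gadget_general (ε xu xv s c w : ℝ)
    (hε0 : 0 ≤ ε) (hε1 : ε < 1 / 9)
    (hxu : xu ∈ Set.Icc (0:ℝ) 1) (hxv : xv ∈ Set.Icc (0:ℝ) 1)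
    (hsum : |s - min (xu + xv) 1| ≤ ε)
    (hconst : |c - 5 / 9| ≤ ε)
    (hlt : s < c - ε → 1 - ε ≤ w)
    (hgt : s > c + ε → w ≤ ε) :
    (xu ≤ ε ∧ xv ≤ ε → 1 - ε ≤ w) ∧
    ((1 - ε ≤ xu ∨ 1 - ε ≤ xv) → w ≤ ε) := by
  constructor
  · rintro ⟨hu, hv⟩
    refine hlt (lt_sub_of_abs_sub_le hsum hconst ?_)
    calc min (xu + xv) 1 ≤ xu + xv := min_le_left _ _
      _ < 5 / 9 - 3 * ε := by linarith
  · intro h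
    have hone := sub_le_min_add_one hxu.1 hxv.1 hε0 h
    exact hgt (add_lt_of_abs_sub_le hsum hconst (by linarith))

/-- Correctness of the generalized-circuit simulation of a Pure-Circuit NOR
gate via `G₊`, `G_c` (constant 5/9), and `G_<`, for every `ε < 1/9`. -/
theorem gcircuit_nor_gadget (ε xu xv s c w : ℝ)
    (hε0 : 0 ≤ ε) (hε1 : ε < 1 / 9)
    (hxu : xu ∈ Set.Icc (0:ℝ) 1) (hxv : xv ∈ Set.Icc (0:ℝ) 1)
    (hs : s ∈ Set.Icc (0:ℝ) 1) (hc : c ∈ Set.Icc (0:ℝ) 1)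
    (hw : w ∈ Set.Icc (0:ℝ) 1)
    (hsum : |s - min (xu + xv) 1| ≤ ε)
    (hconst : |c - 5 / 9| ≤ ε)
    (hlt : s < c - ε → 1 - ε ≤ w)
    (hgt : s > c + ε → w ≤ ε) :
    (xu ≤ ε ∧ xv ≤ ε → 1 - ε ≤ w) ∧
    ((1 - ε ≤ xu ∨ 1 - ε ≤ xv) → w ≤ ε) :=
  gcircuit_nor_gadget_general ε xu xv s c w hε0 hε1 hxu hxv hsum hconst hlt hgt
end

section
/- Let ε be a real number with 0 ≤ ε < 1/10, and let x_u, c₁, c₂, v, w ∈ [0, 1] satisfy: |c₁ − 3/10| ≤ ε; |c₂ − 7/10| ≤ ε; if x_u < c₁ − ε then v ≤ ε, and if x_u > c₁ + ε then v ≥ 1 − ε; if x_u < c₂ − ε then w ≤ ε, and if x_u > c₂ + ε then w ≥ 1 − ε. Then: (1) if x_u ≤ ε then v ≤ ε and w ≤ ε; (2) if x_u ≥ 1 − ε then v ≥ 1 − ε and w ≥ 1 − ε; (3) if x_u ≤ 1/2 then w ≤ ε; and (4) if x_u ≥ 1/2 then v ≥ 1 − ε. In particular, for every x_u at least one of v,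 w lies in [0, ε] ∪ [1 − ε, 1]. -/
/-!
A comparison gate whose threshold `c` lies within `ε` of `a` outputs a clean `0` as soon as its
input is more than `2ε` below `a`, and a clean `1` as soon as it is more than `2ε` above `a`.
For `ε < 1/10` the thresholds `3/10` and `7/10` are more than `2ε` away from `ε`, `1/2` and
`1 - ε`; since every input lies on one side of `1/2`, one of the two gates is always pure.
-/

section Comparison

variable {ε x c a v : ℝ}

theorem comparison_le_of_add_two_mul_lt (hc : |c - a| ≤ ε) (hlow : x < c - ε → v ≤ ε)
    (hx : x + 2 * ε < a) : v ≤ ε :=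
  hlow (by linarith [(abs_le.mp hc).1])

theorem comparison_ge_of_add_two_mul_lt (hc : |c - a| ≤ ε) (hhigh : x > c + ε → 1 - ε ≤ v)
    (hx : a + 2 * ε < x) : 1 - ε ≤ v :=
  hhigh (by linarith [(abs_le.mp hc).2])

end Comparison

theorem gcircuit_purify_gadget_general (ε xu c1 c2 v w : ℝ)
    (hε1 : ε < 1 / 10)
    (hv : v ∈ Set.Icc (0:ℝ) 1) (hw : w ∈ Set.Icc (0:ℝ) 1)
    (hconst1 : |c1 - 3 / 10| ≤ ε) (hconst2 : |c2 - 7 / 10| ≤ ε)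
    (hv1 : xu < c1 - ε → v ≤ ε) (hv2 : xu > c1 + ε → 1 - ε ≤ v)
    (hw1 : xu < c2 - ε → w ≤ ε) (hw2 : xu > c2 + ε → 1 - ε ≤ w) :
    (xu ≤ ε → v ≤ ε ∧ w ≤ ε) ∧
    (1 - ε ≤ xu → 1 - ε ≤ v ∧ 1 - ε ≤ w) ∧
    (xu ≤ 1 / 2 → w ≤ ε) ∧
    (1 / 2 ≤ xu → 1 - ε ≤ v) ∧
    (v ∈ Set.Icc (0:ℝ) ε ∪ Set.Icc (1 - ε) 1 ∨
      w ∈ Set.Icc (0:ℝ) ε ∪ Set.Icc (1 - ε) 1) := by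
  have hv_low := comparison_le_of_add_two_mul_lt hconst1 hv1
  have hv_high := comparison_ge_of_add_two_mul_lt hconst1 hv2
  have hw_low := comparison_le_of_add_two_mul_lt hconst2 hw1
  have hw_high := comparison_ge_of_add_two_mul_lt hconst2 hw2
  have hw_half : xu ≤ 1 / 2 → w ≤ ε := fun h => hw_low (by linarith)
  have hv_half : 1 / 2 ≤ xu → 1 - ε ≤ v := fun h => hv_high (by linarith)
  refine ⟨fun h => ⟨hv_low (by linarith), hw_low (by linarith)⟩,
    fun h => ⟨hv_high (by linarith), hw_high (by linarith)⟩, hw_half, hv_half, ?_⟩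
  rcases le_or_gt xu (1 / 2) with h | h
  · exact Or.inr (Or.inl ⟨hw.1, hw_half h⟩)
  · exact Or.inl (Or.inr ⟨hv_half h.le, hv.2⟩)

/-- Correctness of the generalized-circuit simulation of a Pure-Circuit
PURIFY gate via the comparison gadgets `x_u > 0.3` and `x_u > 0.7`, for every
`ε < 1/10`. -/
theorem gcircuit_purify_gadget (ε xu c1 c2 v w : ℝ)
    (hε0 : 0 ≤ ε) (hε1 : ε < 1 / 10)
    (hxu : xu ∈ Set.Icc (0:ℝ) 1)
    (hc1 : c1 ∈ Set.Icc (0:ℝ) 1) (hc2 : c2 ∈ Set.Icc (0:ℝ) 1)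
    (hv : v ∈ Set.Icc (0:ℝ) 1) (hw : w ∈ Set.Icc (0:ℝ) 1)
    (hconst1 : |c1 - 3 / 10| ≤ ε) (hconst2 : |c2 - 7 / 10| ≤ ε)
    (hv1 : xu < c1 - ε → v ≤ ε) (hv2 : xu > c1 + ε → 1 - ε ≤ v)
    (hw1 : xu < c2 - ε → w ≤ ε) (hw2 : xu > c2 + ε → 1 - ε ≤ w) :
    (xu ≤ ε → v ≤ ε ∧ w ≤ ε) ∧
    (1 - ε ≤ xu → 1 - ε ≤ v ∧ 1 - ε ≤ w) ∧
    (xu ≤ 1 / 2 → w ≤ ε) ∧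
    (1 / 2 ≤ xu → 1 - ε ≤ v) ∧
    (v ∈ Set.Icc (0:ℝ) ε ∪ Set.Icc (1 - ε) 1 ∨
      w ∈ Set.Icc (0:ℝ) ε ∪ Set.Icc (1 - ε) 1) :=
  gcircuit_purify_gadget_general ε xu c1 c2 v w hε1 hv hw hconst1 hconst2 hv1 hv2 hw1 hw2
end

section
/- Every normalized two-action polymatrix game has a 1/3-well-supported Nash equilibrium: there exists a strategy profile s such that for every player i, if s_i > 0 then u_i(1, s) ≥ max(u_i(0, s), u_i(1, s)) − 1/3, and if s_i < 1 then u_i(0, s) ≥ max(u_i(0, s), u_i(1, s)) − 1/3. -/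
/-!
Let `g i s = u_i(1, s) - u_i(0, s)`. It is affine in `s`, and normalization gives
`|g i s| ≤ 1` for every mixed profile `s`. Players are fixed one at a time. If the gain of
some undecided player stays `≤ 1/3` whatever the undecided players do, fix it to action `0`;
if it stays `≥ -1/3`, fix it to action `1`. Otherwise every undecided player `i` has
completions `s` with `g i s > 1/3` and with `g i s < -1/3`, and letting all undecided players
mix `1/2` works: that profile `h` is the midpoint of `s` and of its reflection through `h`,
which is again a mixed profile, so `|2 * g i h - g i s| ≤ 1`.
-/

open Finset

/-- The payoff of player `i` for playing action `a` against the profile `s`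
(where `s j ∈ [0,1]` is the probability that `j` plays action `true`):
`u_i(a, s) = Σ_{j : E i j} ((1 − s j)·A i j a false + s j·A i j a true)`. -/
noncomputable def polyPay {V : Type} [Fintype V]
    (E : V → V → Bool) (A : V → V → Bool → Bool → ℝ)
    (i : V) (a : Bool) (s : V → ℝ) : ℝ :=
  ∑ j ∈ univ.filter (fun j => E i j = true),
    ((1 - s j) * A i j a false + s j * A i j a true)

open Function

def WellSupportedAt {V : Type} (ε : ℝ) (g : (V → ℝ) → ℝ) (s : V → ℝ) (i : V) : Prop :=
  (0 < s i → -ε ≤ g s) ∧ (s i < 1 → g s ≤ ε)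

section
variable {V : Type} [DecidableEq V] (g : V → (V → ℝ) →ᵃ[ℝ] ℝ)

theorem abs_two_mul_sub_le_of_eqOn (hg : ∀ i s, (∀ j, s j ∈ Set.Icc (0 : ℝ) 1) → |g i s| ≤ 1)
    {R : Finset V} {t s : V → ℝ} (i : V) (ht : ∀ j, t j ∈ Set.Icc (0 : ℝ) 1)
    (hs : ∀ j, s j ∈ Set.Icc (0 : ℝ) 1) (hst : Set.EqOn s t (↑R)ᶜ) :
    |2 * g i (R.piecewise (fun _ => 1 / 2) t) - g i s| ≤ 1 := by
  set h := R.piecewise (fun _ => 1 / 2) t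
  have hmid : 2 * g i h = g i s + g i (Equiv.pointReflection h s) := by
    rw [← midpoint_pointReflection_right (R := ℝ) h s, AffineMap.map_midpoint,
      midpoint_eq_smul_add]
    simp
  have hrefl : ∀ j, Equiv.pointReflection h s j ∈ Set.Icc (0 : ℝ) 1 := by
    intro j
    simp only [Equiv.pointReflection_apply, vsub_eq_sub, vadd_eq_add, Pi.add_apply,
      Pi.sub_apply, h]
    by_cases hj : j ∈ R
    · rw [piecewise_eq_of_mem _ _ _ hj]
      constructor <;> linarith [(hs j).1, (hs j).2]
    · rw [piecewise_eq_of_notMem _ _ _ hj, hst hj]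
      simpa using ht j
  rw [hmid, add_sub_cancel_left]
  exact hg i _ hrefl

theorem exists_wellSupportedAt_of_erase {R : Finset V} {t : V → ℝ} {i : V} (hi : i ∈ R) {c : ℝ}
    (hfixed : ∀ s, (∀ j, s j ∈ Set.Icc (0 : ℝ) 1) → Set.EqOn s t (↑R)ᶜ → s i = c →
      WellSupportedAt (1/3) (g i) s i)
    (herase : ∃ s, (∀ j, s j ∈ Set.Icc (0 : ℝ) 1) ∧ Set.EqOn s (update t i c) (↑(R.erase i))ᶜ ∧
      ∀ k ∈ R.erase i, WellSupportedAt (1/3) (g k) s k) :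
    ∃ s, (∀ j, s j ∈ Set.Icc (0 : ℝ) 1) ∧ Set.EqOn s t (↑R)ᶜ ∧
      ∀ k ∈ R, WellSupportedAt (1/3) (g k) s k := by
  obtain ⟨s, hs, hst, hwell⟩ := herase
  have hsi : s i = c := by simpa using hst (notMem_erase i R)
  have hst' : Set.EqOn s t (↑R)ᶜ := fun j hj => by
    have hji : j ≠ i := fun h => hj (h ▸ hi)
    simpa [hji] using hst (fun h => hj (mem_of_mem_erase h))
  refine ⟨s, hs, hst', fun k hk => ?_⟩
  by_cases hki : k = i
  · subst hki; exact hfixed s hs hst' hsi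
  · exact hwell k (mem_erase.2 ⟨hki, hk⟩)

theorem exists_wellSupportedAt_on (hg : ∀ i s, (∀ j, s j ∈ Set.Icc (0 : ℝ) 1) → |g i s| ≤ 1)
    (R : Finset V) (t : V → ℝ) (ht : ∀ j, t j ∈ Set.Icc (0 : ℝ) 1) :
    ∃ s, (∀ j, s j ∈ Set.Icc (0 : ℝ) 1) ∧ Set.EqOn s t (↑R)ᶜ ∧
      ∀ i ∈ R, WellSupportedAt (1/3) (g i) s i := by
  induction R using Finset.strongInduction generalizing t with
  | H R ih =>
  have hupdate : ∀ i, ∀ c ∈ Set.Icc (0 : ℝ) 1, ∀ j, update t i c j ∈ Set.Icc (0 : ℝ) 1 :=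
    fun i c hc j => by
      by_cases hj : j = i
      · subst hj; simpa using hc
      · simpa [hj] using ht j
  by_cases hfix0 : ∃ i ∈ R,
      ∀ s, (∀ j, s j ∈ Set.Icc (0 : ℝ) 1) → Set.EqOn s t (↑R)ᶜ → g i s ≤ 1/3
  · obtain ⟨i, hi, hle⟩ := hfix0
    refine exists_wellSupportedAt_of_erase g hi (c := 0) (fun s hs hst hsi => ?_)
      (ih _ (erase_ssubset hi) _ (hupdate i 0 (by simp)))
    exact ⟨fun h => by simp [hsi] at h, fun _ => hle s hs hst⟩
  by_cases hfix1 : ∃ i ∈ R,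
      ∀ s, (∀ j, s j ∈ Set.Icc (0 : ℝ) 1) → Set.EqOn s t (↑R)ᶜ → -(1/3) ≤ g i s
  · obtain ⟨i, hi, hle⟩ := hfix1
    refine exists_wellSupportedAt_of_erase g hi (c := 1) (fun s hs hst hsi => ?_)
      (ih _ (erase_ssubset hi) _ (hupdate i 1 (by simp)))
    exact ⟨fun _ => hle s hs hst, fun h => by simp [hsi] at h⟩
  push Not at hfix0 hfix1
  refine ⟨R.piecewise (fun _ => 1 / 2) t, fun j => ?_,
    fun j hj => piecewise_eq_of_notMem _ _ _ hj, fun i hi => ?_⟩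
  · by_cases hj : j ∈ R
    · rw [piecewise_eq_of_mem _ _ _ hj]; norm_num
    · rw [piecewise_eq_of_notMem _ _ _ hj]; exact ht j
  obtain ⟨s, hs, hst, hgt⟩ := hfix0 i hi
  obtain ⟨s', hs', hst', hlt⟩ := hfix1 i hi
  have := abs_le.1 (abs_two_mul_sub_le_of_eqOn g hg i ht hs hst)
  have := abs_le.1 (abs_two_mul_sub_le_of_eqOn g hg i ht hs' hst')
  constructor <;> intro <;> linarith

end

theorem exists_wellSupportedAt {V : Type} [Fintype V] (g : V → (V → ℝ) →ᵃ[ℝ] ℝ)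
    (hg : ∀ i s, (∀ j, s j ∈ Set.Icc (0 : ℝ) 1) → |g i s| ≤ 1) :
    ∃ s, (∀ j, s j ∈ Set.Icc (0 : ℝ) 1) ∧ ∀ i, WellSupportedAt (1/3) (g i) s i := by
  classical
  obtain ⟨s, hs, -, hwell⟩ := exists_wellSupportedAt_on g hg univ 0 fun _ => by simp
  exact ⟨s, hs, fun i => hwell i (mem_univ i)⟩

theorem sum_lineMap_mem_Icc {ι : Type*} (S : Finset ι) (c : ι → Bool → ℝ) {m M : ℝ}
    (hc : ∀ f : ι → Bool, ∑ j ∈ S, c j (f j) ∈ Set.Icc m M) {x : ι → ℝ}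
    (hx : ∀ j, x j ∈ Set.Icc (0 : ℝ) 1) :
    ∑ j ∈ S, AffineMap.lineMap (c j false) (c j true) (x j) ∈ Set.Icc m M := by
  have hpure : ∀ j, ∃ b b' : Bool,
      c j b ≤ AffineMap.lineMap (c j false) (c j true) (x j) ∧
      AffineMap.lineMap (c j false) (c j true) (x j) ≤ c j b' := by
    intro j
    obtain ⟨hmin, hmax⟩ :=
      segment_subset_uIcc _ _ (lineMap_mem_segment ℝ (c j false) (c j true) (hx j))
    obtain ⟨b, hb⟩ : ∃ b, c j b = min (c j false) (c j true) :=
      (min_choice _ _).elim (fun h => ⟨false, h.symm⟩) (fun h => ⟨true, h.symm⟩)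
    obtain ⟨b', hb'⟩ : ∃ b, c j b = max (c j false) (c j true) :=
      (max_choice _ _).elim (fun h => ⟨false, h.symm⟩) (fun h => ⟨true, h.symm⟩)
    exact ⟨b, b', hb ▸ hmin, hb' ▸ hmax⟩
  choose f f' hf hf' using hpure
  exact ⟨(hc f).1.trans (sum_le_sum fun j _ => hf j),
    (sum_le_sum fun j _ => hf' j).trans (hc f').2⟩

section
variable {V : Type} [Fintype V] (E : V → V → Bool) (A : V → V → Bool → Bool → ℝ)

theorem polyPay_eq_sum_lineMap (i : V) (a : Bool) (s : V → ℝ) :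
    polyPay E A i a s = ∑ j ∈ univ.filter (fun j => E i j = true),
      AffineMap.lineMap (A i j a false) (A i j a true) (s j) := by
  simp [polyPay, AffineMap.lineMap_apply_module]

noncomputable def polyPayAffine (i : V) (a : Bool) : (V → ℝ) →ᵃ[ℝ] ℝ where
  toFun := polyPay E A i a
  linear := ∑ j ∈ univ.filter (fun j => E i j = true),
    (A i j a true - A i j a false) • LinearMap.proj j
  map_vadd' s v := by
    simp only [polyPay, vadd_eq_add, Pi.add_apply, LinearMap.sum_apply, LinearMap.smul_apply,
      LinearMap.coe_proj, Function.eval, smul_eq_mul, ← sum_add_distrib]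
    exact sum_congr rfl fun j _ => by ring

theorem polyPay_mem_Icc {i : V} {a : Bool}
    (hpure : ∀ f : V → Bool, ∑ j ∈ univ.filter (fun j => E i j = true), A i j a (f j) ∈
      Set.Icc (0 : ℝ) 1)
    {s : V → ℝ} (hs : ∀ j, s j ∈ Set.Icc (0 : ℝ) 1) :
    polyPay E A i a s ∈ Set.Icc (0 : ℝ) 1 := by
  rw [polyPay_eq_sum_lineMap]
  exact sum_lineMap_mem_Icc _ (A i · a) hpure hs

end

theorem polymatrix_third_wsne_general {V : Type} [Fintype V]
    (E : V → V → Bool)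
    (A : V → V → Bool → Bool → ℝ)
    (hnorm : ∀ (i : V) (a : Bool) (f : V → Bool),
      (0 ≤ ∑ j ∈ univ.filter (fun j => E i j = true), A i j a (f j)) ∧
      (∑ j ∈ univ.filter (fun j => E i j = true), A i j a (f j)) ≤ 1) :
    ∃ s : V → ℝ, (∀ i, s i ∈ Set.Icc (0:ℝ) 1) ∧
      ∀ i : V,
        (0 < s i →
          polyPay E A i true s ≥
            max (polyPay E A i false s) (polyPay E A i true s) - 1 / 3) ∧
        (s i < 1 →
          polyPay E A i false s ≥
            max (polyPay E A i false s) (polyPay E A i true s) - 1 / 3) := by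
  have hpay (i : V) (a : Bool) {s : V → ℝ} (hs : ∀ j, s j ∈ Set.Icc (0 : ℝ) 1) :=
    polyPay_mem_Icc E A (hnorm i a) hs
  obtain ⟨s, hs, hwell⟩ := exists_wellSupportedAt
    (fun i => polyPayAffine E A i true - polyPayAffine E A i false) fun i s hs =>
      abs_sub_le_of_nonneg_of_le (hpay i true hs).1 (hpay i true hs).2
        (hpay i false hs).1 (hpay i false hs).2
  refine ⟨s, hs, fun i => ⟨fun hpos => ?_, fun hlt => ?_⟩⟩
  · have : -(1/3) ≤ polyPay E A i true s - polyPay E A i false s := (hwell i).1 hpos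
    exact sub_le_iff_le_add.2 (max_le (by linarith) (by linarith))
  · have : polyPay E A i true s - polyPay E A i false s ≤ 1/3 := (hwell i).2 hlt
    exact sub_le_iff_le_add.2 (max_le (by linarith) (by linarith))

/-- Every normalized two-action polymatrix game has a 1/3-well-supported
Nash equilibrium. -/
theorem polymatrix_third_wsne {V : Type} [Fintype V]
    (E : V → V → Bool)
    (hsymm : ∀ i j, E i j = E j i) (hirr : ∀ i, E i i = false)
    (A : V → V → Bool → Bool → ℝ)
    (hnorm : ∀ (i : V) (a : Bool) (f : V → Bool),
      (0 ≤ ∑ j ∈ univ.filter (fun j => E i j = true), A i j a (f j)) ∧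
      (∑ j ∈ univ.filter (fun j => E i j = true), A i j a (f j)) ≤ 1) :
    ∃ s : V → ℝ, (∀ i, s i ∈ Set.Icc (0:ℝ) 1) ∧
      ∀ i : V,
        (0 < s i →
          polyPay E A i true s ≥
            max (polyPay E A i false s) (polyPay E A i true s) - 1 / 3) ∧
        (s i < 1 →
          polyPay E A i false s ≥
            max (polyPay E A i false s) (polyPay E A i true s) - 1 / 3) :=
  polymatrix_third_wsne_general E A hnorm
end

section
/- Let ε be a real number with 0 ≤ ε < 1/3 and let q, p_v, p_w ∈ [0, 1]. Suppose the ε-well-supported conditions hold: if p_v > 0 then q ≥ (1/3)(1 − q) − ε; if p_v < 1 then (1/3)(1 − q) ≥ q − ε; if p_w > 0 then (1/3)q ≥ (1 − q) − ε; if p_w < 1 then (1 − q) ≥ (1/3)q − ε. Then: (1) if q = 0 then p_v = 0 and p_w = 0; (2) if q = 1 then p_v = 1 and p_w = 1; and (3) in all cases p_v ∈ {0, 1} or p_w ∈ {0, 1}. Specifically, if q ≤ 1/2 then p_w = 0, and if q ≥ 1/2 then p_v = 1. -/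
/-!
On either side of `q = 1/2` one output player has a payoff gap of at least `1/3 > ε`
between its two actions: for `q ≤ 1/2`, `w` gains `1 - 4q/3 ≥ 1/3` by playing 'zero', and
for `q ≥ 1/2`, `v` gains `4q/3 - 1/3 ≥ 1/3` by playing 'one'. An ε-well-supported
strategy then puts no weight on the worse action. At `q = 0` and `q = 1` the same gap
appears for the other player as well.
-/

theorem prob_eq_zero_of_payoff_gap {p u₀ u₁ ε : ℝ} (hp : 0 ≤ p)
    (hsupp : 0 < p → u₀ - ε ≤ u₁) (hgap : u₁ < u₀ - ε) : p = 0 := by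
  by_contra hne
  exact (hsupp (lt_of_le_of_ne hp (Ne.symm hne))).not_gt hgap

theorem prob_eq_one_of_payoff_gap {p u₀ u₁ ε : ℝ} (hp : p ≤ 1)
    (hsupp : p < 1 → u₁ - ε ≤ u₀) (hgap : u₀ < u₁ - ε) : p = 1 := by
  by_contra hne
  exact (hsupp (lt_of_le_of_ne hp hne)).not_gt hgap

theorem polymatrix_wsne_purify_gadget_general (ε q pv pw : ℝ)
    (hε1 : ε < 1 / 3)
    (hpv : pv ∈ Set.Icc (0:ℝ) 1) (hpw : pw ∈ Set.Icc (0:ℝ) 1)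
    (h1 : 0 < pv → (1 / 3) * (1 - q) - ε ≤ q)
    (h2 : pv < 1 → q - ε ≤ (1 / 3) * (1 - q))
    (h3 : 0 < pw → (1 - q) - ε ≤ (1 / 3) * q)
    (h4 : pw < 1 → (1 / 3) * q - ε ≤ 1 - q) :
    (q = 0 → pv = 0 ∧ pw = 0) ∧
    (q = 1 → pv = 1 ∧ pw = 1) ∧
    ((pv = 0 ∨ pv = 1) ∨ (pw = 0 ∨ pw = 1)) ∧
    (q ≤ 1 / 2 → pw = 0) ∧
    (1 / 2 ≤ q → pv = 1) := by
  have hw : q ≤ 1 / 2 → pw = 0 := fun hq =>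
    prob_eq_zero_of_payoff_gap hpw.1 h3 (by linarith)
  have hv : 1 / 2 ≤ q → pv = 1 := fun hq =>
    prob_eq_one_of_payoff_gap hpv.2 h2 (by linarith)
  refine ⟨fun hq => ⟨?_, hw (by linarith)⟩, fun hq => ⟨hv (by linarith), ?_⟩, ?_, hw, hv⟩
  · exact prob_eq_zero_of_payoff_gap hpv.1 h1 (by subst hq; linarith)
  · exact prob_eq_one_of_payoff_gap hpw.2 h4 (by subst hq; linarith)
  · rcases le_or_gt q (1 / 2) with hq | hq
    · exact Or.inr (Or.inl (hw hq))
    · exact Or.inl (Or.inr (hv hq.le))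

/-- Correctness of the PURIFY-gate gadget in the polymatrix-game reduction
for ε-well-supported Nash equilibria, for every `ε < 1/3`. Here `q` is the
probability that the input player plays 'one', and `p_v, p_w` are the
probabilities that the output players play 'one'. -/
theorem polymatrix_wsne_purify_gadget (ε q pv pw : ℝ)
    (hε0 : 0 ≤ ε) (hε1 : ε < 1 / 3)
    (hq : q ∈ Set.Icc (0:ℝ) 1)
    (hpv : pv ∈ Set.Icc (0:ℝ) 1) (hpw : pw ∈ Set.Icc (0:ℝ) 1)
    (h1 : 0 < pv → (1 / 3) * (1 - q) - ε ≤ q)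
    (h2 : pv < 1 → q - ε ≤ (1 / 3) * (1 - q))
    (h3 : 0 < pw → (1 - q) - ε ≤ (1 / 3) * q)
    (h4 : pw < 1 → (1 / 3) * q - ε ≤ 1 - q) :
    (q = 0 → pv = 0 ∧ pw = 0) ∧
    (q = 1 → pv = 1 ∧ pw = 1) ∧
    ((pv = 0 ∨ pv = 1) ∨ (pw = 0 ∨ pw = 1)) ∧
    (q ≤ 1 / 2 → pw = 0) ∧
    (1 / 2 ≤ q → pv = 1) :=
  polymatrix_wsne_purify_gadget_general ε q pv pw hε1 hpv hpw h1 h2 h3 h4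
end

section
/- For every finite directed graph with vertex set V and edge relation E ⊆ V × V, there exists an assignment x : V → [0, 1] such that for every vertex v, writing S_v = Σ_{u : (u,v) ∈ E} x(u): if S_v > 1/2 + 1/6 then x(v) ≤ 1/6, and if S_v < 1/2 − 1/6 then x(v) ≥ 1 − 1/6. That is, every threshold game has a 1/6-approximate equilibrium. -/
open Finset

section ThresholdAux

variable {V : Type} [Fintype V] [DecidableEq V]

/-- Auxiliary goodness predicate: `w` assigns weights in `{1,3,5}` on `s`,
and on `s` (with external charges `e`) the threshold rules hold. -/
def GoodW (E : V → V → Bool) (s : Finset V) (e : V → ℕ) (w : V → ℕ) : Prop :=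
  (∀ v ∈ s, w v = 1 ∨ w v = 3 ∨ w v = 5) ∧
  ∀ v ∈ s, (5 ≤ e v + ∑ u ∈ s, (if E u v = true then w u else 0) → w v = 1) ∧
           (e v + ∑ u ∈ s, (if E u v = true then w u else 0) ≤ 1 → w v = 5)

lemma tail_step (E : V → V → Bool) {n : ℕ} {s K : Finset V} (e : V → ℕ)
    (ih : ∀ t : Finset V, t.card ≤ n → ∀ e' : V → ℕ, ∃ w, GoodW E t e' w)
    (hs : s.card ≤ n + 1) (hKs : K ⊆ s) (hKne : K.Nonempty)
    (hKcl : ∀ v ∈ K, ∀ u ∈ s, E u v = true → u ∈ K)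
    (wK : V → ℕ) (hvals : ∀ v ∈ K, wK v = 1 ∨ wK v = 3 ∨ wK v = 5)
    (hKok : ∀ v ∈ K,
      (5 ≤ e v + ∑ u ∈ K, (if E u v = true then wK u else 0) → wK v = 1) ∧
      (e v + ∑ u ∈ K, (if E u v = true then wK u else 0) ≤ 1 → wK v = 5)) :
    ∃ w, GoodW E s e w := by
  have hKcard : 1 ≤ K.card := Finset.card_pos.mpr hKne
  have hcard : (s \ K).card ≤ n := by
    have h1 := Finset.card_sdiff_of_subset hKs
    have h2 := Finset.card_le_card hKs
    omega
  obtain ⟨w', hvals', hok'⟩ := ih (s \ K) hcard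
    (fun u => e u + ∑ k ∈ K, (if E k u = true then wK k else 0))
  refine ⟨fun u => if u ∈ K then wK u else w' u, ?_, ?_⟩
  · intro v hv
    by_cases h : v ∈ K
    · simpa [h] using hvals v h
    · simpa [h] using hvals' v (Finset.mem_sdiff.mpr ⟨hv, h⟩)
  · intro v hv
    have hsplit : ∑ u ∈ s, (if E u v = true then (if u ∈ K then wK u else w' u) else 0)
        = (∑ u ∈ K, (if E u v = true then wK u else 0))
          + ∑ u ∈ s \ K, (if E u v = true then w' u else 0) := by
      rw [← Finset.sum_sdiff hKs, Nat.add_comm]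
      congr 1
      · exact Finset.sum_congr rfl fun u hu => by simp [hu]
      · exact Finset.sum_congr rfl fun u hu => by simp [(Finset.mem_sdiff.mp hu).2]
    by_cases h : v ∈ K
    · have hz : ∑ u ∈ s \ K, (if E u v = true then w' u else 0) = 0 := by
        refine Finset.sum_eq_zero fun u hu => ?_
        rcases Finset.mem_sdiff.mp hu with ⟨hus, hunK⟩
        by_cases hE : E u v = true
        · exact absurd (hKcl v h u hus hE) hunK
        · simp [hE]
      constructor
      · intro hge
        rw [hsplit, hz] at hge
        simp only [h, if_true]
        exact (hKok v h).1 (by omega)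
      · intro hle
        rw [hsplit, hz] at hle
        simp only [h, if_true]
        exact (hKok v h).2 (by omega)
    · have hv' : v ∈ s \ K := Finset.mem_sdiff.mpr ⟨hv, h⟩
      have hh := hok' v hv'
      simp only [] at hh
      constructor
      · intro hge
        rw [hsplit] at hge
        simp only [h, if_false]
        exact hh.1 (by omega)
      · intro hle
        rw [hsplit] at hle
        simp only [h, if_false]
        exact hh.2 (by omega)


lemma key_lemma (E : V → V → Bool) :
    ∀ (n : ℕ) (s : Finset V), s.card ≤ n → ∀ e : V → ℕ, ∃ w, GoodW E s e w := by
  intro n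
  induction n with
  | zero =>
    intro s hs e
    have hse : s = ∅ := Finset.card_eq_zero.mp (Nat.le_zero.mp hs)
    subst hse
    exact ⟨fun _ => 1, fun v hv => absurd hv (by simp), fun v hv => absurd hv (by simp)⟩
  | succ n ih =>
    intro s hs e
    rcases eq_or_ne s ∅ with rfl | hse
    · exact ⟨fun _ => 1, fun v hv => absurd hv (by simp), fun v hv => absurd hv (by simp)⟩
    have hsne : s.Nonempty := Finset.nonempty_iff_ne_empty.mpr hse
    classical
    have hsF : s ∈ s.powerset.filter
        (fun K => K.Nonempty ∧ ∀ v ∈ K, ∀ u ∈ s, E u v = true → u ∈ K) := by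
      rw [Finset.mem_filter, Finset.mem_powerset]
      exact ⟨le_refl s, hsne, fun v hv u hu _ => hu⟩
    obtain ⟨K, hKF, hKmin⟩ := Finset.exists_min_image
      (s.powerset.filter
        (fun K => K.Nonempty ∧ ∀ v ∈ K, ∀ u ∈ s, E u v = true → u ∈ K))
      Finset.card ⟨s, hsF⟩
    rw [Finset.mem_filter, Finset.mem_powerset] at hKF
    obtain ⟨hKs, hKne, hKcl⟩ := hKF
    by_cases hA : ∃ v ∈ K, ∀ u ∈ K, ¬ E u v = true
    · -- Case A: some vertex of K has no in-neighbours at all in s.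
      obtain ⟨v, hvK, hvno⟩ := hA
      have hvs : v ∈ s := hKs hvK
      have hnos : ∀ u ∈ s, ¬ E u v = true := fun u hu hE =>
        hvno u (hKcl v hvK u hu hE) hE
      refine tail_step E e ih hs (Finset.singleton_subset_iff.mpr hvs)
        (Finset.singleton_nonempty v)
        (fun c hc u hu hE => ?_) (fun _ => if e v ≤ 1 then 5 else 1) ?_ ?_
      · rw [Finset.mem_singleton] at hc
        subst hc
        exact absurd hE (hnos u hu)
      · intro c hc
        by_cases h1 : e v ≤ 1 <;> simp [h1]
      · intro c hc
        rw [Finset.mem_singleton] at hc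
        subst hc
        have hsum : ∑ u ∈ ({c} : Finset V),
            (if E u c = true then (if e c ≤ 1 then 5 else 1) else 0) = 0 := by
          rw [Finset.sum_singleton, if_neg (hnos c hvs)]
        rw [hsum]
        by_cases h1 : e c ≤ 1
        · rw [if_pos h1]
          exact ⟨fun h => by omega, fun _ => rfl⟩
        · rw [if_neg h1]
          exact ⟨fun _ => rfl, fun h => by omega⟩
    · push_neg at hA
      -- hA : ∀ v ∈ K, ∃ u ∈ K, E u v = true
      by_cases hL : ∀ v ∈ K, e v = 0 ∧ (K.filter (fun u => E u v = true)).card = 1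
      · -- Case B1: all vertices of K lonely; assign 3 everywhere on K.
        refine tail_step E e ih hs hKs hKne hKcl (fun _ => 3)
          (fun v hv => Or.inr (Or.inl rfl)) ?_
        intro v hv
        have hl := hL v hv
        have hsum : ∑ u ∈ K, (if E u v = true then (3:ℕ) else 0) = 3 := by
          rw [← Finset.sum_filter, Finset.sum_const, smul_eq_mul, hl.2, one_mul]
        rw [hsum, hl.1]
        exact ⟨fun h => by omega, fun h => by omega⟩
      · -- Case B2: some vertex of K is not lonely.
        push_neg at hL
        set lonely : V → Prop :=
          fun v => e v = 0 ∧ (K.filter (fun u => E u v = true)).card = 1 with hlonely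
        have hL' : ∃ v₀ ∈ K, ¬ lonely v₀ := by
          obtain ⟨v₀, hv₀, hn⟩ := hL
          exact ⟨v₀, hv₀, fun hc => hn hc.1 hc.2⟩
        have hExU : ∀ v, v ∈ K → ∃ u, u ∈ K ∧ E u v = true := by
          intro v hv
          obtain ⟨u, hu, hE⟩ := hA v hv
          exact ⟨u, hu, hE⟩
        set p : V → V :=
          fun v => if h : ∃ u, u ∈ K ∧ E u v = true then h.choose else v with hp
        have hpK : ∀ v ∈ K, p v ∈ K ∧ E (p v) v = true := by
          intro v hv
          have h := hExU v hv
          simp only [hp, dif_pos h]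
          exact h.choose_spec
        have huniq : ∀ v ∈ K, lonely v → ∀ u ∈ K, E u v = true → u = p v := by
          intro v hv hlv u hu hE
          obtain ⟨a, ha⟩ := Finset.card_eq_one.mp hlv.2
          have h1 : u ∈ K.filter (fun u => E u v = true) :=
            Finset.mem_filter.mpr ⟨hu, hE⟩
          have h2 : p v ∈ K.filter (fun u => E u v = true) :=
            Finset.mem_filter.mpr ⟨(hpK v hv).1, (hpK v hv).2⟩
          rw [ha, Finset.mem_singleton] at h1 h2
          rw [h1, h2]
        have hiter : ∀ v ∈ K, ∀ m, p^[m] v ∈ K := by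
          intro v hv m
          induction m with
          | zero => simpa
          | succ m ihm =>
            rw [Function.iterate_succ_apply']
            exact (hpK _ ihm).1
        have hclaim : ∀ v ∈ K, ∃ m, ¬ lonely (p^[m] v) := by
          intro v hv
          by_contra hcon
          push_neg at hcon
          have hCmem : K.filter (fun u => ∃ m, p^[m] v = u) ∈ s.powerset.filter
              (fun K => K.Nonempty ∧ ∀ c ∈ K, ∀ u ∈ s, E u c = true → u ∈ K) := by
            rw [Finset.mem_filter, Finset.mem_powerset]
            refine ⟨(Finset.filter_subset _ _).trans hKs,
              ⟨v, Finset.mem_filter.mpr ⟨hv, 0, rfl⟩⟩, ?_⟩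
            intro c hc u hu hE
            obtain ⟨hcK, m, hm⟩ := Finset.mem_filter.mp hc
            have hlc : lonely c := hm ▸ hcon m
            have huK : u ∈ K := hKcl c hcK u hu hE
            have hupc : u = p c := huniq c hcK hlc u huK hE
            refine Finset.mem_filter.mpr ⟨huK, m + 1, ?_⟩
            rw [Function.iterate_succ_apply', hm, hupc]
          have hCeq : K.filter (fun u => ∃ m, p^[m] v = u) = K :=
            Finset.eq_of_subset_of_card_le (Finset.filter_subset _ _)
              (hKmin _ hCmem)
          obtain ⟨v₀, hv₀, hnl₀⟩ := hL'
          rw [← hCeq, Finset.mem_filter] at hv₀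
          obtain ⟨-, m, hm⟩ := hv₀
          exact hnl₀ (hm ▸ hcon m)
        set d : V → ℕ :=
          fun v => if h : ∃ m, ¬ lonely (p^[m] v) then Nat.find h else 0 with hd
        have hdspec : ∀ v ∈ K, ¬ lonely (p^[d v] v) := by
          intro v hv
          have h := hclaim v hv
          simp only [hd, dif_pos h]
          exact Nat.find_spec h
        have hdmin : ∀ v ∈ K, ∀ m < d v, lonely (p^[m] v) := by
          intro v hv m hm
          have h := hclaim v hv
          simp only [hd, dif_pos h] at hm
          exact not_not.mp (Nat.find_min h hm)
        have hdpos : ∀ v ∈ K, lonely v → 1 ≤ d v := by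
          intro v hv hl
          by_contra hcc
          push_neg at hcc
          have h0 : d v = 0 := by omega
          have := hdspec v hv
          rw [h0] at this
          exact this hl
        have hdzero : ∀ v ∈ K, ¬ lonely v → d v = 0 := by
          intro v hv hnl
          have h := hclaim v hv
          simp only [hd, dif_pos h]
          rw [Nat.find_eq_zero]
          simpa using hnl
        have hdp : ∀ v ∈ K, lonely v → d (p v) = d v - 1 := by
          intro v hv hl
          have hpv := (hpK v hv).1
          have h' := hclaim (p v) hpv
          have h1 : 1 ≤ d v := hdpos v hv hl
          have heq : d (p v) = Nat.find h' := by simp only [hd, dif_pos h']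
          rw [heq]
          rw [Nat.find_eq_iff]
          constructor
          · have hsp := hdspec v hv
            rw [show d v = (d v - 1) + 1 by omega, Function.iterate_succ_apply] at hsp
            exact hsp
          · intro m hm
            rw [not_not]
            have := hdmin v hv (m + 1) (by omega)
            rwa [Function.iterate_succ_apply] at this
        refine tail_step E e ih hs hKs hKne hKcl
          (fun v => if lonely v ∧ Odd (d v) then 5 else 1) ?_ ?_
        · intro v hv
          by_cases h : lonely v ∧ Odd (d v)
          · exact Or.inr (Or.inr (if_pos h))
          · exact Or.inl (if_neg h)
        · intro v hv
          by_cases hl : lonely v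
          · -- lonely vertex: its in-sum is exactly the weight of p v
            have hfil : K.filter (fun u => E u v = true) = {p v} := by
              obtain ⟨a, ha⟩ := Finset.card_eq_one.mp hl.2
              have h2 : p v ∈ K.filter (fun u => E u v = true) :=
                Finset.mem_filter.mpr ⟨(hpK v hv).1, (hpK v hv).2⟩
              rw [ha] at h2 ⊢
              rw [Finset.mem_singleton] at h2
              rw [h2]
            have hsum : ∑ u ∈ K, (if E u v = true then
                (if lonely u ∧ Odd (d u) then (5:ℕ) else 1) else 0)
                = (if lonely (p v) ∧ Odd (d (p v)) then 5 else 1) := by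
              rw [← Finset.sum_filter, hfil, Finset.sum_singleton]
            rw [hsum]
            simp only [hl.1]
            have hdp' := hdp v hv hl
            have h1 := hdpos v hv hl
            by_cases hodd : Odd (d v)
            · have hpval : (if lonely (p v) ∧ Odd (d (p v)) then (5:ℕ) else 1) = 1 := by
                rw [if_neg]
                rintro ⟨hlp, hop⟩
                rw [hdp'] at hop
                rw [Nat.odd_iff] at hodd hop
                omega
              rw [hpval]
              exact ⟨fun h => by omega, fun _ => if_pos ⟨hl, hodd⟩⟩
            · have hge2 : 2 ≤ d v := by
                rcases Nat.even_or_odd (d v) with he | ho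
                · rw [Nat.even_iff] at he; omega
                · exact absurd ho hodd
              have hlp : lonely (p v) := by
                by_contra hnl
                have := hdzero (p v) (hpK v hv).1 hnl
                omega
              have hop : Odd (d (p v)) := by
                rw [hdp', Nat.odd_iff]
                rw [Nat.odd_iff] at hodd
                omega
              rw [if_pos ⟨hlp, hop⟩]
              refine ⟨fun _ => if_neg ?_, fun h => by omega⟩
              rintro ⟨-, ho⟩
              exact hodd ho
          · -- non-lonely vertex: total in-weight is at least 2
            have hwv : (if lonely v ∧ Odd (d v) then (5:ℕ) else 1) = 1 :=
              if_neg (fun hc => hl hc.1)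
            have hcard1 : 1 ≤ (K.filter (fun u => E u v = true)).card := by
              obtain ⟨u, hu, hE⟩ := hA v hv
              exact Finset.card_pos.mpr ⟨u, Finset.mem_filter.mpr ⟨hu, hE⟩⟩
            have hsumge : (K.filter (fun u => E u v = true)).card ≤
                ∑ u ∈ K, (if E u v = true then
                  (if lonely u ∧ Odd (d u) then (5:ℕ) else 1) else 0) := by
              rw [← Finset.sum_filter]
              calc (K.filter (fun u => E u v = true)).card
                  = ∑ _u ∈ K.filter (fun u => E u v = true), 1 := by
                    rw [Finset.sum_const, smul_eq_mul, mul_one]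
                _ ≤ _ := Finset.sum_le_sum (fun u hu => by
                    by_cases h : lonely u ∧ Odd (d u)
                    · rw [if_pos h]; omega
                    · rw [if_neg h])
            simp only [hwv]
            refine ⟨fun _ => trivial, fun hle => ?_⟩
            rcases Nat.eq_zero_or_pos (e v) with he0 | hep
            · have hc2 : (K.filter (fun u => E u v = true)).card ≠ 1 :=
                fun hc => hl ⟨he0, hc⟩
              omega
            · omega

end ThresholdAux

/-- Every threshold game (finite directed graph) has a 1/6-approximate
equilibrium. -/
theorem threshold_game_sixth_equilibrium {V : Type} [Fintype V]
    (E : V → V → Bool) :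
    ∃ x : V → ℝ, (∀ v, x v ∈ Set.Icc (0:ℝ) 1) ∧
      ∀ v : V,
        ((∑ u ∈ univ.filter (fun u => E u v = true), x u) > 1 / 2 + 1 / 6 →
          x v ≤ 1 / 6) ∧
        ((∑ u ∈ univ.filter (fun u => E u v = true), x u) < 1 / 2 - 1 / 6 →
          x v ≥ 1 - 1 / 6) := by
  classical
  obtain ⟨w, hvals, hok⟩ :=
    key_lemma E (Finset.univ.card) (Finset.univ : Finset V) le_rfl (fun _ => 0)
  refine ⟨fun v => (w v : ℝ) / 6, ?_, ?_⟩
  · intro v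
    show (w v : ℝ) / 6 ∈ Set.Icc 0 1
    rw [Set.mem_Icc]
    rcases hvals v (Finset.mem_univ v) with h | h | h <;> rw [h] <;> norm_num
  · intro v
    have hNe : ∑ u ∈ Finset.univ, (if E u v = true then w u else 0)
        = ∑ u ∈ univ.filter (fun u => E u v = true), w u :=
      (Finset.sum_filter _ _).symm
    have hsum : ∑ u ∈ univ.filter (fun u => E u v = true), ((w u : ℝ) / 6)
        = ((∑ u ∈ univ.filter (fun u => E u v = true), w u : ℕ) : ℝ) / 6 := by
      rw [Nat.cast_sum, Finset.sum_div]
    have hok' := hok v (Finset.mem_univ v)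
    simp only [hNe] at hok'
    constructor
    · intro hgt
      rw [hsum] at hgt
      have h5 : 5 ≤ (0:ℕ) + ∑ u ∈ univ.filter (fun u => E u v = true), w u := by
        have h4 : (4:ℝ) < ((∑ u ∈ univ.filter (fun u => E u v = true), w u : ℕ) : ℝ) := by
          nlinarith
        have : (4:ℕ) < ∑ u ∈ univ.filter (fun u => E u v = true), w u := by
          exact_mod_cast h4
        omega
      have hw1 := hok'.1 h5
      show (w v : ℝ) / 6 ≤ 1 / 6
      rw [hw1]
      norm_num
    · intro hlt
      rw [hsum] at hlt
      have h1 : (0:ℕ) + ∑ u ∈ univ.filter (fun u => E u v = true), w u ≤ 1 := by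
        have h2 : ((∑ u ∈ univ.filter (fun u => E u v = true), w u : ℕ) : ℝ) < 2 := by
          nlinarith
        have : ∑ u ∈ univ.filter (fun u => E u v = true), w u < 2 := by
          exact_mod_cast h2
        omega
      have hw5 := hok'.2 h1
      show (w v : ℝ) / 6 ≥ 1 - 1 / 6
      rw [hw5]
      norm_num
end

section
/- Let ε be a real number with 0 ≤ ε < 1/6 and let u, a, b, d, w, c, v ∈ [0, 1] satisfy the threshold responses TR(u, a), TR(a, b), TR(b, d), TR(d, w), TR(u + b, c), and TR(c, v), where TR(S, y) means: if S > 1/2 + ε then y ≤ ε, and if S < 1/2 − ε then y ≥ 1 − ε. Then: (1) if u ≤ ε then v ≤ ε and w ≤ ε; (2) if u ≥ 1 − ε then v ≥ 1 − ε and w ≥ 1 − ε; and (3) it is not the case that both v ∈ (ε, 1 − ε) and w ∈ (ε, 1 − ε); in fact, if w ∈ (ε, 1 − ε) then v ≥ 1 − ε. -/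
/-!
Each `TR` node acts as an approximate inverter, so along `u → a → b → d → w` the input bit is
copied to `w` and `b`, and `c` inverts `u + b`, after which `v` copies the bit once more.
A mid-range `w` propagates backwards: it forces `d`, then `b` and `a`, into
`[1/2 - ε, 1/2 + ε]`, and `u ≥ 1/2 - ε`. Then `u + b ≥ 1 - 2ε > 1/2 + ε` (this is where
`ε < 1/6` enters), so `c ≤ ε` and `v ≥ 1 - ε`.
-/

/-- The ε-approximate equilibrium response of a threshold-game player with
in-neighbour sum `S` and value `y`. -/
def TR (ε S y : ℝ) : Prop :=
  (1 / 2 + ε < S → y ≤ ε) ∧ (S < 1 / 2 - ε → 1 - ε ≤ y)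

open Set

namespace TR

variable {ε S y : ℝ}

theorem le_of_one_sub_le (h : TR ε S y) (hε : ε < 1 / 4) (hS : 1 - ε ≤ S) : y ≤ ε :=
  h.1 (by linarith)

theorem one_sub_le_of_le (h : TR ε S y) (hε : ε < 1 / 4) (hS : S ≤ ε) : 1 - ε ≤ y :=
  h.2 (by linarith)

theorem mem_Icc_of_mem_Ioo (h : TR ε S y) (hy : y ∈ Ioo ε (1 - ε)) :
    S ∈ Icc (1 / 2 - ε) (1 / 2 + ε) :=
  ⟨le_of_not_gt fun hS => (h.2 hS).not_gt hy.2, le_of_not_gt fun hS => (h.1 hS).not_gt hy.1⟩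

end TR

theorem Icc_half_subset_Ioo {ε : ℝ} (hε : ε < 1 / 4) :
    Icc (1 / 2 - ε) (1 / 2 + ε) ⊆ Ioo ε (1 - ε) :=
  fun _ hx => ⟨by linarith [hx.1], by linarith [hx.2]⟩

theorem threshold_purify_gadget_general (ε u a b d w c v : ℝ)
    (hε1 : ε < 1 / 6)
    (h1 : TR ε u a) (h2 : TR ε a b) (h3 : TR ε b d) (h4 : TR ε d w)
    (h5 : TR ε (u + b) c) (h6 : TR ε c v) :
    (u ≤ ε → v ≤ ε ∧ w ≤ ε) ∧
    (1 - ε ≤ u → 1 - ε ≤ v ∧ 1 - ε ≤ w) ∧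
    ¬(v ∈ Set.Ioo ε (1 - ε) ∧ w ∈ Set.Ioo ε (1 - ε)) ∧
    (w ∈ Set.Ioo ε (1 - ε) → 1 - ε ≤ v) := by
  have hε : ε < 1 / 4 := by linarith
  have mid_w : w ∈ Ioo ε (1 - ε) → 1 - ε ≤ v := fun hw => by
    have hd := h4.mem_Icc_of_mem_Ioo hw
    have hb := h3.mem_Icc_of_mem_Ioo (Icc_half_subset_Ioo hε hd)
    have ha := h2.mem_Icc_of_mem_Ioo (Icc_half_subset_Ioo hε hb)
    have hu := h1.mem_Icc_of_mem_Ioo (Icc_half_subset_Ioo hε ha)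
    have hc : c ≤ ε := h5.1 (by linarith [hu.1, hb.1])
    exact h6.one_sub_le_of_le hε hc
  refine ⟨fun hu => ?_, fun hu => ?_, fun ⟨hv, hw⟩ => (mid_w hw).not_gt hv.2, mid_w⟩
  · have hb := h2.le_of_one_sub_le hε (h1.one_sub_le_of_le hε hu)
    have hc : 1 - ε ≤ c := h5.2 (by linarith)
    exact ⟨h6.le_of_one_sub_le hε hc, h4.le_of_one_sub_le hε (h3.one_sub_le_of_le hε hb)⟩
  · have hb := h2.one_sub_le_of_le hε (h1.le_of_one_sub_le hε hu)
    have hc : c ≤ ε := h5.1 (by linarith)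
    exact ⟨h6.one_sub_le_of_le hε hc, h4.one_sub_le_of_le hε (h3.le_of_one_sub_le hε hb)⟩

/-- Correctness of the PURIFY-gate gadget in the threshold-game reduction,
for every `ε < 1/6`: input node `u`, auxiliary nodes `a, b, d, c`, output
nodes `w, v`, wired as `TR(u,a)`, `TR(a,b)`, `TR(b,d)`, `TR(d,w)`,
`TR(u+b,c)`, `TR(c,v)`. -/
theorem threshold_purify_gadget (ε u a b d w c v : ℝ)
    (hε0 : 0 ≤ ε) (hε1 : ε < 1 / 6)
    (hu : u ∈ Set.Icc (0:ℝ) 1) (ha : a ∈ Set.Icc (0:ℝ) 1)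
    (hb : b ∈ Set.Icc (0:ℝ) 1) (hd : d ∈ Set.Icc (0:ℝ) 1)
    (hw : w ∈ Set.Icc (0:ℝ) 1) (hc : c ∈ Set.Icc (0:ℝ) 1)
    (hv : v ∈ Set.Icc (0:ℝ) 1)
    (h1 : TR ε u a) (h2 : TR ε a b) (h3 : TR ε b d) (h4 : TR ε d w)
    (h5 : TR ε (u + b) c) (h6 : TR ε c v) :
    (u ≤ ε → v ≤ ε ∧ w ≤ ε) ∧
    (1 - ε ≤ u → 1 - ε ≤ v ∧ 1 - ε ≤ w) ∧
    ¬(v ∈ Set.Ioo ε (1 - ε) ∧ w ∈ Set.Ioo ε (1 - ε)) ∧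
    (w ∈ Set.Ioo ε (1 - ε) → 1 - ε ≤ v) :=
  threshold_purify_gadget_general ε u a b d w c v hε1 h1 h2 h3 h4 h5 h6
end

section
/- Let δ ∈ (0, 1/4) and let ε be a real number with 0 ≤ ε < δ(1 − 2δ). Then for every γ ∈ [2δ, 1 − 2δ]: (1 − 2ε/γ) − γ ≥ 2(δ(1 − 2δ) − ε)/(1 − 2δ), and in particular (1 − 2ε/γ) − γ > 0. -/
/-- The amplification step for a chain of NOT gadgets in ε-Nash equilibria of
polymatrix games: for a utility gap `γ ∈ [2δ, 1 − 2δ]`, the next gap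
`1 − 2ε/γ` exceeds `γ` by at least the positive constant
`2(δ(1 − 2δ) − ε)/(1 − 2δ)`. -/
theorem not_chain_amplification (δ ε : ℝ)
    (hδ : δ ∈ Set.Ioo (0:ℝ) (1 / 4))
    (hε0 : 0 ≤ ε) (hε1 : ε < δ * (1 - 2 * δ)) :
    ∀ γ ∈ Set.Icc (2 * δ) (1 - 2 * δ),
      2 * (δ * (1 - 2 * δ) - ε) / (1 - 2 * δ) ≤ (1 - 2 * ε / γ) - γ ∧
      0 < (1 - 2 * ε / γ) - γ := by
  obtain ⟨hδ0, hδ4⟩ := hδ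
  intro γ ⟨hγ1, hγ2⟩
  have hγ0 : 0 < γ := lt_of_lt_of_le (by linarith) hγ1
  have hd : 0 < 1 - 2 * δ := by linarith
  have key : 2 * (δ * (1 - 2 * δ) - ε) / (1 - 2 * δ) ≤ (1 - 2 * ε / γ) - γ := by
    rw [div_le_iff₀ hd, show (1 - 2 * ε / γ - γ) = (γ - 2 * ε - γ ^ 2) / γ by
      field_simp, div_mul_eq_mul_div, le_div_iff₀ hγ0]
    nlinarith [mul_nonneg (sub_nonneg.2 hγ1) (sub_nonneg.2 hγ2), hε0, mul_pos hγ0 hd,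
      mul_nonneg hε0 (by linarith : (0:ℝ) ≤ 1 - 4 * δ)]
  refine ⟨key, lt_of_lt_of_le ?_ key⟩
  exact div_pos (by linarith) hd
end

section
/- Let δ ∈ (0, 1/4) and let ε be a real number with 0 ≤ ε < δ(1 − 2δ). Then there exists k ∈ ℕ, depending only on ε and δ, such that for every sequence q₁, q₂, …, q_{2k+1} ∈ [0, 1] satisfying, for all 1 ≤ i ≤ 2k, the ε-Nash constraints q_{i+1}·(2q_i − 1) ≤ ε and (1 − q_{i+1})·(1 − 2q_i) ≤ ε, the following hold: (a) if q₁ ≤ ε/(2δ) then q_{2k+1} ≤ δ; and (b) if q₁ ≥ 1 − ε/(2δ) then q_{2k+1} ≥ 1 − δ. -/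
/-- One double-step of the NOT chain: if `a ≤ t`, the ε-Nash constraints force
`c * (1 - 2t - 2ε) ≤ ε * (1 - 2t)`. -/
lemma not_step (ε t a b c : ℝ) (hε0 : 0 ≤ ε)
    (ht2 : 0 < 1 - 2*t - 2*ε)
    (hat : a ≤ t) (hb1 : b ≤ 1) (hc0 : 0 ≤ c)
    (h2 : (1 - b) * (1 - 2*a) ≤ ε) (h3 : c * (2*b - 1) ≤ ε) :
    c * (1 - 2*t - 2*ε) ≤ ε * (1 - 2*t) := by
  nlinarith [mul_nonneg hc0 (sub_nonneg.2 hb1), mul_nonneg (sub_nonneg.2 hb1) (by linarith : (0:ℝ) ≤ t - a), mul_nonneg hc0 hε0]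

lemma half (δ ε : ℝ)
    (hδ : δ ∈ Set.Ioo (0:ℝ) (1 / 4))
    (hε0 : 0 ≤ ε) (hε1 : ε < δ * (1 - 2 * δ)) :
    ∃ k : ℕ, ∀ q : ℕ → ℝ,
      (∀ i : ℕ, 1 ≤ i → i ≤ 2 * k + 1 → q i ∈ Set.Icc (0:ℝ) 1) →
      (∀ i : ℕ, 1 ≤ i → i ≤ 2 * k →
        q (i + 1) * (2 * q i - 1) ≤ ε ∧ (1 - q (i + 1)) * (1 - 2 * q i) ≤ ε) →
      q 1 ≤ ε / (2 * δ) → q (2 * k + 1) ≤ δ := by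
  obtain ⟨hδ0, hδ4⟩ := hδ
  set B : ℝ := ε / (2 * δ) with hBdef
  have hεδ : ε < δ := by nlinarith
  have hB0 : 0 ≤ B := div_nonneg hε0 (by linarith)
  have hBε : B * (2 * δ) = ε := by rw [hBdef]; field_simp
  -- case: B ≤ δ, take k = 0
  by_cases hBδ : B ≤ δ
  · exact ⟨0, fun q _ _ h1 => le_trans h1 hBδ⟩
  push_neg at hBδ
  have hε0' : 0 < ε := by nlinarith
  have hB2 : 1 - 2*B - 2*ε > 0 := by
    have h1 : B * (2*δ) = ε := hBε
    nlinarith [sq_nonneg (δ - ε)]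
  have hδ2 : 1 - 2*δ - 2*ε > 0 := by nlinarith
  set m : ℝ := min (δ * (1 - 2*δ) - ε) (B * (1 - 2*B) - ε) with hmdef
  have hm1 : δ * (1 - 2*δ) - ε > 0 := by nlinarith
  have hm2 : B * (1 - 2*B) - ε > 0 := by nlinarith
  have hm0 : 0 < m := lt_min hm1 hm2
  -- concavity: for t ∈ [δ, B], m ≤ t(1-2t) - ε
  have hconc : ∀ t : ℝ, δ ≤ t → t ≤ B → m ≤ t * (1 - 2*t) - ε := by
    intro t h1 h2
    have hma : m ≤ δ * (1 - 2*δ) - ε := min_le_left _ _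
    have hmb : m ≤ B * (1 - 2*B) - ε := min_le_right _ _
    nlinarith [mul_nonneg (sub_nonneg.2 h1) (sub_nonneg.2 h2)]
  refine ⟨⌈B / m⌉₊, fun q hbnd hcon hq1 => ?_⟩
  set k := ⌈B / m⌉₊ with hk
  have hkm : B ≤ (k : ℝ) * m := by
    have := Nat.le_ceil (B / m)
    calc B = (B / m) * m := by field_simp
    _ ≤ (k : ℝ) * m := by exact mul_le_mul_of_nonneg_right this hm0.le
  have key : ∀ j : ℕ, j ≤ k → q (2*j + 1) ≤ max δ (B - j * m) := by
    intro j
    induction j with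
    | zero => intro _; simpa using Or.inr hq1 |>.elim (fun h => le_max_of_le_left h) (fun h => le_max_of_le_right (by simpa using h))
    | succ n ih =>
      intro hn
      have hn' : n ≤ k := by omega
      have hprev := ih hn'
      -- indices
      have hi1 : 1 ≤ 2*n+1 := by omega
      have hi2 : 2*n+1 ≤ 2*k := by omega
      have hi3 : 2*n+2 ≤ 2*k := by omega
      obtain ⟨c1a, c1b⟩ := hcon (2*n+1) hi1 hi2
      obtain ⟨c2a, c2b⟩ := hcon (2*n+2) (by omega) hi3
      have ha := hbnd (2*n+1) hi1 (by omega)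
      have hb := hbnd (2*n+2) (by omega) (by omega)
      have hc := hbnd (2*n+3) (by omega) (by omega)
      have e1 : 2*n+1+1 = 2*n+2 := by ring
      have e2 : 2*n+2+1 = 2*n+3 := by ring
      rw [e1] at c1a c1b
      rw [e2] at c2a c2b
      have e3 : 2*(n+1)+1 = 2*n+3 := by ring
      rw [e3]
      -- two cases on the max
      rcases le_or_gt (B - n*m) δ with hcase | hcase
      · -- t = δ
        have hqt : q (2*n+1) ≤ δ := le_trans hprev (by simp [max_eq_left hcase])
        have hstep := not_step ε δ (q (2*n+1)) (q (2*n+2)) (q (2*n+3)) hε0 hδ2 hqt hb.2 hc.1 c1b c2a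
        have : q (2*n+3) ≤ δ := by nlinarith
        exact le_max_of_le_left this
      · -- t = B - n*m ∈ (δ, B]
        have ht : max δ (B - n*m) = B - n*m := max_eq_right hcase.le
        rw [ht] at hprev
        have htB : B - n*m ≤ B := by
          have : (0:ℝ) ≤ n * m := mul_nonneg (Nat.cast_nonneg n) hm0.le
          linarith
        have ht2 : 0 < 1 - 2*(B - n*m) - 2*ε := by
          have : (0:ℝ) ≤ n * m := mul_nonneg (Nat.cast_nonneg n) hm0.le
          linarith
        have hstep := not_step ε (B - n*m) (q (2*n+1)) (q (2*n+2)) (q (2*n+3)) hε0 ht2 hprev hb.2 hc.1 c1b c2a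
        have hct := hconc (B - n*m) hcase.le htB
        have : q (2*n+3) ≤ (B - n*m) - m := by nlinarith
        refine le_max_of_le_right ?_
        push_cast
        linarith
  have := key k le_rfl
  have hfin : max δ (B - k*m) = δ := max_eq_left (by linarith)
  rw [hfin] at this
  exact this

/-- The NOT-gadget chain lemma for ε-Nash equilibria of two-action polymatrix
games: there is a `k` (depending only on `ε` and `δ`) such that for any chain
`q₁, …, q_{2k+1}` of action-'one' probabilities satisfying the ε-Nash
constraints of consecutive NOT gadgets, if `q₁ ≤ ε/(2δ)` then
`q_{2k+1} ≤ δ`, and if `q₁ ≥ 1 − ε/(2δ)` then `q_{2k+1} ≥ 1 − δ`. -/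
theorem not_chain_lemma (δ ε : ℝ)
    (hδ : δ ∈ Set.Ioo (0:ℝ) (1 / 4))
    (hε0 : 0 ≤ ε) (hε1 : ε < δ * (1 - 2 * δ)) :
    ∃ k : ℕ, ∀ q : ℕ → ℝ,
      (∀ i : ℕ, 1 ≤ i → i ≤ 2 * k + 1 → q i ∈ Set.Icc (0:ℝ) 1) →
      (∀ i : ℕ, 1 ≤ i → i ≤ 2 * k →
        q (i + 1) * (2 * q i - 1) ≤ ε ∧ (1 - q (i + 1)) * (1 - 2 * q i) ≤ ε) →
      (q 1 ≤ ε / (2 * δ) → q (2 * k + 1) ≤ δ) ∧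
      (1 - ε / (2 * δ) ≤ q 1 → 1 - δ ≤ q (2 * k + 1)) := by
  obtain ⟨k, hk⟩ := half δ ε hδ hε0 hε1
  refine ⟨k, fun q hbnd hcon => ⟨hk q hbnd hcon, fun h1 => ?_⟩⟩
  have hr := hk (fun i => 1 - q i)
    (fun i hi1 hi2 => by
      obtain ⟨h0, h1⟩ := hbnd i hi1 hi2
      exact ⟨by simpa using h1, by simpa using h0⟩)
    (fun i hi1 hi2 => by
      obtain ⟨ha, hb⟩ := hcon i hi1 hi2
      constructor
      · calc (1 - q (i+1)) * (2 * (1 - q i) - 1) = (1 - q (i+1)) * (1 - 2 * q i) := by ring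
        _ ≤ ε := hb
      · calc (1 - (1 - q (i+1))) * (1 - 2 * (1 - q i)) = q (i+1) * (2 * q i - 1) := by ring
        _ ≤ ε := ha)
    (by simpa using by linarith : 1 - q 1 ≤ ε / (2 * δ))
  linarith
end

section
/- Let δ be a real number with 0 < δ ≤ (9 − √73)/4 and let q₁, q₂ ∈ [0, 1]. Define D = (1 − q₁)/2 + (1 − q₂)/2 − ((1 + δ)/(6 − 2δ))·(q₁ + q₂). Then: (1) if q₁ ≤ δ or q₂ ≤ δ, then D ≥ 2δ; and (2) if q₁ ≥ 1 − δ and q₂ ≥ 1 − δ, then −D ≥ 2δ. -/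
/-!
Since `1/2 + (1 + δ)/(6 - 2δ) = 2/(3 - δ)`, the gap is `D = 1 - 2(q₁ + q₂)/(3 - δ)`, an affine
function of `q₁ + q₂`. In case (1) we have `q₁ + q₂ ≤ 1 + δ`, in case (2) `q₁ + q₂ ≥ 2 - 2δ`, and at
both extremes `|D| = (1 - 3δ)/(3 - δ)`. This is at least `2δ` exactly when `2δ² - 9δ + 1 ≥ 0`,
i.e. when `δ` lies below the smaller root `(9 - √73)/4`.
-/

/-- The utility gap `D` of the output player of the AND gadget, in favour of 'zero'. -/
noncomputable def andGadgetGap (δ q₁ q₂ : ℝ) : ℝ :=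
  (1 - q₁) / 2 + (1 - q₂) / 2 - ((1 + δ) / (6 - 2 * δ)) * (q₁ + q₂)

namespace andGadgetGap

variable {δ q₁ q₂ : ℝ}

theorem eq_one_sub_div (hδ : δ ≠ 3) :
    andGadgetGap δ q₁ q₂ = 1 - 2 * (q₁ + q₂) / (3 - δ) := by
  have h3 : (3 : ℝ) - δ ≠ 0 := sub_ne_zero.mpr (Ne.symm hδ)
  rw [andGadgetGap, show (6 : ℝ) - 2 * δ = 2 * (3 - δ) by ring]
  field_simp
  ring

theorem div_le_of_add_le (hδ : δ < 3) (h : q₁ + q₂ ≤ 1 + δ) :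
    (1 - 3 * δ) / (3 - δ) ≤ andGadgetGap δ q₁ q₂ := by
  have h3 : 0 < 3 - δ := sub_pos.mpr hδ
  rw [eq_one_sub_div hδ.ne, div_le_iff₀ h3, sub_mul, div_mul_cancel₀ _ h3.ne']
  linarith

theorem div_le_neg_of_le_add (hδ : δ < 3) (h : 2 - 2 * δ ≤ q₁ + q₂) :
    (1 - 3 * δ) / (3 - δ) ≤ -andGadgetGap δ q₁ q₂ := by
  have h3 : 0 < 3 - δ := sub_pos.mpr hδ
  rw [eq_one_sub_div hδ.ne, neg_sub, div_le_iff₀ h3, sub_mul, div_mul_cancel₀ _ h3.ne']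
  linarith

end andGadgetGap

theorem two_mul_sq_sub_nine_mul_add_one_nonneg {δ : ℝ} (hδ : δ ≤ (9 - √73) / 4) :
    0 ≤ 2 * δ ^ 2 - 9 * δ + 1 := by
  have hsq : √73 ^ 2 = 73 := Real.sq_sqrt (by norm_num)
  have hsmall : δ - (9 - √73) / 4 ≤ 0 := by linarith
  have hlarge : δ - (9 + √73) / 4 ≤ 0 := by linarith [Real.sqrt_nonneg 73]
  have factor : 2 * δ ^ 2 - 9 * δ + 1 = 2 * ((δ - (9 - √73) / 4) * (δ - (9 + √73) / 4)) := by
    linear_combination (1 / 8 : ℝ) * hsq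
  rw [factor]
  exact mul_nonneg zero_le_two (mul_nonneg_of_nonpos_of_nonpos hsmall hlarge)

theorem lt_one_fourth_of_le_nine_sub_sqrt {δ : ℝ} (hδ : δ ≤ (9 - √73) / 4) : δ < 1 / 4 := by
  have : (8 : ℝ) < √73 := by
    rw [Real.lt_sqrt (by norm_num)]; norm_num
  linarith

theorem two_mul_le_div_of_le_nine_sub_sqrt {δ : ℝ} (hδ : δ ≤ (9 - √73) / 4) :
    2 * δ ≤ (1 - 3 * δ) / (3 - δ) := by
  have h3 : 0 < 3 - δ := by linarith [lt_one_fourth_of_le_nine_sub_sqrt hδ]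
  rw [le_div_iff₀ h3]
  nlinarith [two_mul_sq_sub_nine_mul_add_one_nonneg hδ]

theorem polymatrix_ne_and_gadget_general (δ q1 q2 : ℝ)
    (hδ1 : δ ≤ (9 - Real.sqrt 73) / 4)
    (hq1 : q1 ∈ Set.Icc (0:ℝ) 1) (hq2 : q2 ∈ Set.Icc (0:ℝ) 1) :
    ((q1 ≤ δ ∨ q2 ≤ δ) →
      2 * δ ≤ (1 - q1) / 2 + (1 - q2) / 2 - ((1 + δ) / (6 - 2 * δ)) * (q1 + q2)) ∧
    ((1 - δ ≤ q1 ∧ 1 - δ ≤ q2) →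
      2 * δ ≤ -((1 - q1) / 2 + (1 - q2) / 2 - ((1 + δ) / (6 - 2 * δ)) * (q1 + q2))) := by
  have hδ3 : δ < 3 := by linarith [lt_one_fourth_of_le_nine_sub_sqrt hδ1]
  have hbound := two_mul_le_div_of_le_nine_sub_sqrt hδ1
  refine ⟨fun h ↦ ?_, fun ⟨h1, h2⟩ ↦ ?_⟩
  · have hsum : q1 + q2 ≤ 1 + δ := by rcases h with h | h <;> linarith [hq1.2, hq2.2]
    exact hbound.trans (andGadgetGap.div_le_of_add_le hδ3 hsum)
  · exact hbound.trans (andGadgetGap.div_le_neg_of_le_add hδ3 (by linarith))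

/-- Correctness of the AND-gate gadget in the polymatrix-game reduction for
ε-Nash equilibria: with `D` the output player's utility gap in favour of
'zero', if some input probability is at most `δ` then `D ≥ 2δ`, and if both
are at least `1 − δ` then `−D ≥ 2δ`. -/
theorem polymatrix_ne_and_gadget (δ q1 q2 : ℝ)
    (hδ0 : 0 < δ) (hδ1 : δ ≤ (9 - Real.sqrt 73) / 4)
    (hq1 : q1 ∈ Set.Icc (0:ℝ) 1) (hq2 : q2 ∈ Set.Icc (0:ℝ) 1) :
    ((q1 ≤ δ ∨ q2 ≤ δ) →
      2 * δ ≤ (1 - q1) / 2 + (1 - q2) / 2 - ((1 + δ) / (6 - 2 * δ)) * (q1 + q2)) ∧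
    ((1 - δ ≤ q1 ∧ 1 - δ ≤ q2) →
      2 * δ ≤ -((1 - q1) / 2 + (1 - q2) / 2 - ((1 + δ) / (6 - 2 * δ)) * (q1 + q2))) :=
  polymatrix_ne_and_gadget_general δ q1 q2 hδ1 hq1 hq2
end

section
/- Let δ be a real number with 0 < δ ≤ (9 − √73)/4 and let q ∈ [0, 1]. Define D_v = ((1 + 2δ)/(3 − 2δ))·(1 − q) − q and D_w = (1 − q) − ((1 + 2δ)/(3 − 2δ))·q. Then: (1) if q ≤ δ then D_v ≥ 2δ and D_w ≥ 2δ; (2) if q ≥ 1 − δ then −D_v ≥ 2δ and −D_w ≥ 2δ; and (3) for every q ∈ [0, 1], |D_v| ≥ 2δ or |D_w| ≥ 2δ; specifically, if q ≥ 1/2 then −D_v ≥ 2δ, and if q ≤ 1/2 then D_w ≥ 2δ. -/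
/-!
Both gaps are affine in `q` with slope `-4 / (3 - 2δ)`, and `D_v(q) = -D_w(1 - q)`. The gap
`D_v` takes the value `(1 - 2δ) / (3 - 2δ)` at `q = δ`, and so does `D_w` at `q = 1/2`;
this value is at least `2δ` as soon as `δ ≤ 1/8`, which the bound `δ ≤ (9 - √73) / 4` implies.
-/

theorem nine_sub_sqrt_73_div_four_le : (9 - Real.sqrt 73) / 4 ≤ 1 / 8 := by
  have h : (17 / 2 : ℝ) ≤ Real.sqrt 73 := Real.le_sqrt_of_sq_le (by norm_num)
  linarith

theorem two_mul_le_purify_margin {δ : ℝ} (hδ : δ ≤ 1 / 8) :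
    2 * δ ≤ (1 - 2 * δ) / (3 - 2 * δ) := by
  rw [le_div_iff₀ (by linarith)]
  nlinarith

section PurifyGaps

variable {δ x : ℝ}

theorem purify_margin_le_gap_of_le_half (hδ : δ < 3 / 2) (hx : x ≤ 1 / 2) :
    (1 - 2 * δ) / (3 - 2 * δ) ≤ (1 - x) - (1 + 2 * δ) / (3 - 2 * δ) * x := by
  have hpos : 0 < 3 - 2 * δ := by linarith
  have hgap : (1 - x) - (1 + 2 * δ) / (3 - 2 * δ) * x
      = (1 - 2 * δ) / (3 - 2 * δ) + 4 / (3 - 2 * δ) * (1 / 2 - x) := by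
    field_simp
    ring
  rw [hgap, le_add_iff_nonneg_right]
  exact mul_nonneg (by positivity) (by linarith)

theorem purify_margin_le_gap_of_le (hδ : δ < 3 / 2) (hx : x ≤ δ) :
    (1 - 2 * δ) / (3 - 2 * δ) ≤ (1 + 2 * δ) / (3 - 2 * δ) * (1 - x) - x := by
  have hpos : 0 < 3 - 2 * δ := by linarith
  have hgap : (1 + 2 * δ) / (3 - 2 * δ) * (1 - x) - x
      = (1 - 2 * δ) / (3 - 2 * δ) + 4 / (3 - 2 * δ) * (δ - x) := by
    field_simp
    ring
  rw [hgap, le_add_iff_nonneg_right]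
  exact mul_nonneg (by positivity) (by linarith)

end PurifyGaps

theorem polymatrix_ne_purify_gadget_general (δ q : ℝ)
    (hδ1 : δ ≤ (9 - Real.sqrt 73) / 4) :
    (q ≤ δ →
      2 * δ ≤ ((1 + 2 * δ) / (3 - 2 * δ)) * (1 - q) - q ∧
      2 * δ ≤ (1 - q) - ((1 + 2 * δ) / (3 - 2 * δ)) * q) ∧
    (1 - δ ≤ q →
      2 * δ ≤ -(((1 + 2 * δ) / (3 - 2 * δ)) * (1 - q) - q) ∧
      2 * δ ≤ -((1 - q) - ((1 + 2 * δ) / (3 - 2 * δ)) * q)) ∧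
    (2 * δ ≤ |((1 + 2 * δ) / (3 - 2 * δ)) * (1 - q) - q| ∨
      2 * δ ≤ |(1 - q) - ((1 + 2 * δ) / (3 - 2 * δ)) * q|) ∧
    (1 / 2 ≤ q → 2 * δ ≤ -(((1 + 2 * δ) / (3 - 2 * δ)) * (1 - q) - q)) ∧
    (q ≤ 1 / 2 → 2 * δ ≤ (1 - q) - ((1 + 2 * δ) / (3 - 2 * δ)) * q) := by
  have hδ : δ ≤ 1 / 8 := hδ1.trans nine_sub_sqrt_73_div_four_le
  have hm := two_mul_le_purify_margin hδ
  have hδ' : δ < 3 / 2 := by linarith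
  have hw (x : ℝ) (hx : x ≤ 1 / 2) : 2 * δ ≤ (1 - x) - (1 + 2 * δ) / (3 - 2 * δ) * x :=
    hm.trans (purify_margin_le_gap_of_le_half hδ' hx)
  have hv (x : ℝ) (hx : x ≤ δ) : 2 * δ ≤ (1 + 2 * δ) / (3 - 2 * δ) * (1 - x) - x :=
    hm.trans (purify_margin_le_gap_of_le hδ' hx)
  -- `D_v(q) = -D_w(1 - q)`
  have hv_half (h : 1 / 2 ≤ q) : 2 * δ ≤ -((1 + 2 * δ) / (3 - 2 * δ) * (1 - q) - q) := by
    have := hw (1 - q) (by linarith)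
    linarith
  refine ⟨fun h => ⟨hv q h, hw q (by linarith)⟩, fun h => ⟨hv_half (by linarith), ?_⟩,
    ?_, hv_half, hw q⟩
  · have := hv (1 - q) (by linarith)
    linarith
  · rcases le_total q (1 / 2) with h | h
    · exact Or.inr ((hw q h).trans (le_abs_self _))
    · exact Or.inl ((hv_half h).trans (neg_le_abs _))

/-- Correctness of the PURIFY-gate gadget in the polymatrix-game reduction
for ε-Nash equilibria: with `D_v, D_w` the output players' utility gaps in
favour of 'zero', pure inputs force both gaps, and for every input at least
one of the two gaps has absolute value at least `2δ`. -/
theorem polymatrix_ne_purify_gadget (δ q : ℝ)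
    (hδ0 : 0 < δ) (hδ1 : δ ≤ (9 - Real.sqrt 73) / 4)
    (hq : q ∈ Set.Icc (0:ℝ) 1) :
    (q ≤ δ →
      2 * δ ≤ ((1 + 2 * δ) / (3 - 2 * δ)) * (1 - q) - q ∧
      2 * δ ≤ (1 - q) - ((1 + 2 * δ) / (3 - 2 * δ)) * q) ∧
    (1 - δ ≤ q →
      2 * δ ≤ -(((1 + 2 * δ) / (3 - 2 * δ)) * (1 - q) - q) ∧
      2 * δ ≤ -((1 - q) - ((1 + 2 * δ) / (3 - 2 * δ)) * q)) ∧
    (2 * δ ≤ |((1 + 2 * δ) / (3 - 2 * δ)) * (1 - q) - q| ∨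
      2 * δ ≤ |(1 - q) - ((1 + 2 * δ) / (3 - 2 * δ)) * q|) ∧
    (1 / 2 ≤ q → 2 * δ ≤ -(((1 + 2 * δ) / (3 - 2 * δ)) * (1 - q) - q)) ∧
    (q ≤ 1 / 2 → 2 * δ ≤ (1 - q) - ((1 + 2 * δ) / (3 - 2 * δ)) * q) :=
  polymatrix_ne_purify_gadget_general δ q hδ1
end

section
/- Let δ ∈ (0, 1/4) and let ε be a real number with 0 ≤ ε < δ(1 − 2δ). Let p, q ∈ [0, 1] satisfy p·(2q − 1) ≤ ε and (1 − p)·(1 − 2q) ≤ ε. Then: (1) if q ≤ δ then p ≥ 1 − δ; and (2) if q ≥ 1 − δ then p ≤ δ. -/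
/-!
A player who puts probability `x` on an action with payoff deficit `D` loses `x * D`, so in an
ε-equilibrium `x * D ≤ ε`. A pure input bit makes the deficit of the wrong output action at
least `1 - 2δ`, and `ε < δ (1 - 2δ)` then leaves less than `δ` on that action.
-/

lemma lt_of_mul_deficit_le {x D c δ ε : ℝ} (hδ : 0 ≤ δ) (hc : 0 ≤ c) (hcD : c ≤ D)
    (hx : x * D ≤ ε) (hε : ε < δ * c) : x < δ := by
  by_contra! hδx
  refine hε.not_ge ?_
  calc δ * c ≤ δ * D := mul_le_mul_of_nonneg_left hcD hδ
    _ ≤ x * D := mul_le_mul_of_nonneg_right hδx (hc.trans hcD)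
    _ ≤ ε := hx

theorem polymatrix_ne_not_gadget_general (δ ε p q : ℝ)
    (hδ : δ ∈ Set.Ioo (0:ℝ) (1 / 4))
    (hε1 : ε < δ * (1 - 2 * δ))
    (h1 : p * (2 * q - 1) ≤ ε)
    (h2 : (1 - p) * (1 - 2 * q) ≤ ε) :
    (q ≤ δ → 1 - δ ≤ p) ∧ (1 - δ ≤ q → p ≤ δ) := by
  obtain ⟨hδ0, hδ1⟩ := hδ
  have hgap : 0 ≤ 1 - 2 * δ := by linarith
  refine ⟨fun hq => ?_, fun hq => ?_⟩
  · have := lt_of_mul_deficit_le hδ0.le hgap (by linarith) h2 hε1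
    linarith
  · exact (lt_of_mul_deficit_le hδ0.le hgap (by linarith) h1 hε1).le

/-- Correctness of the NOT-gate gadget in the polymatrix-game reduction for
ε-Nash equilibria: with `q` the input player's probability of 'one' and `p`
the output player's probability of 'one', the ε-Nash constraints force the
output to encode the negation of a pure input bit. -/
theorem polymatrix_ne_not_gadget (δ ε p q : ℝ)
    (hδ : δ ∈ Set.Ioo (0:ℝ) (1 / 4))
    (hε0 : 0 ≤ ε) (hε1 : ε < δ * (1 - 2 * δ))
    (hp : p ∈ Set.Icc (0:ℝ) 1) (hq : q ∈ Set.Icc (0:ℝ) 1)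
    (h1 : p * (2 * q - 1) ≤ ε)
    (h2 : (1 - p) * (1 - 2 * q) ≤ ε) :
    (q ≤ δ → 1 - δ ≤ p) ∧ (1 - δ ≤ q → p ≤ δ) :=
  polymatrix_ne_not_gadget_general δ ε p q hδ hε1 h1 h2
end
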